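/- Let N ≥ 1, m ≥ 1, let u : Fin m → (ZMod N → ZMod 4) and κ, κ' : Fin m → ZMod 4, and define s(t) = (1+i) · ∑_{k=0}^{m−1} 2^k · i^{u_k(t)} · i^{κ_k} and s'(t) = (1+i) · ∑_{k=0}^{m−1} 2^k · i^{u_k(t)} · i^{κ'_k}. Suppose that for all k ≠ l, |θ_{u_k,u_l}(0)| ≤ 1 + √(N+1). Setting Δ_k = i^{κ_k} − i^{κ'_k}, one has ∑_{t ∈ ZMod N} |s(t) − s'(t)|² ≥ 2·N·∑_{k=0}^{m−1} 4^k·|Δ_k|² − 2·(1 + √(N+1))·∑_{k ≠ l} 2^{k+l}·|Δ_k|·|Δ_l|. -/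

import Mathlib

/-- For `a ∈ ZMod 4`, the complex number `i^a := Complex.I ^ a.val`. -/
noncomputable def zi (a : ZMod 4) : ℂ := Complex.I ^ a.val

/-- Periodic correlation of complex sequences of period `N` at shift `τ`:
`θ_{s,s'}(τ) = ∑_t s(t+τ) · conj (s'(t))`. -/
noncomputable def pcorr {N : ℕ} [NeZero N] (s s' : ZMod N → ℂ) (τ : ZMod N) : ℂ :=
  ∑ t : ZMod N, s (t + τ) * (starRingEnd ℂ) (s' t)

/-- Periodic correlation of quaternary sequences of period `N` at shift `τ`:
`θ_{u,v}(τ) = ∑_t i^{u(t+τ)} · conj (i^{v(t)})`. -/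
noncomputable def qcorr {N : ℕ} [NeZero N] (u v : ZMod N → ZMod 4) (τ : ZMod N) : ℂ :=
  ∑ t : ZMod N, zi (u (t + τ)) * (starRingEnd ℂ) (zi (v t))

/-!
With `c_k = 2^k Δ_k` and `x_k = i^{u_k}` one has `s - s' = (1 + i) ∑_k c_k x_k` and `|1 + i|² = 2`.
The energy `∑_t |∑_k c_k x_k(t)|²` expands into the Gram form `∑_{k,l} Re (c_k c̄_l θ_{u_k,u_l}(0))`:
its diagonal terms equal `N |c_k|²` because `|i^a| = 1`, and each off-diagonal term is at least
`-|c_k| |c_l| |θ_{u_k,u_l}(0)|`.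
-/

open Finset ComplexConjugate

lemma sq_norm_eq_re_mul_conj (z : ℂ) : ‖z‖ ^ 2 = (z * conj z).re := by
  rw [Complex.mul_conj']
  norm_cast

lemma sum_sq_norm_sum_mul {ι τ : Type*} [Fintype ι] [Fintype τ] (c : ι → ℂ) (x : ι → τ → ℂ) :
    ∑ t, ‖∑ k, c k * x k t‖ ^ 2 =
      ∑ k, ∑ l, (c k * conj (c l) * ∑ t, x k t * conj (x l t)).re := by
  have hexpand : ∀ t, ‖∑ k, c k * x k t‖ ^ 2 =
      (∑ k, ∑ l, c k * conj (c l) * (x k t * conj (x l t))).re := by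
    intro t
    rw [sq_norm_eq_re_mul_conj, map_sum, sum_mul_sum]
    congr 1
    refine sum_congr rfl fun k _ => sum_congr rfl fun l _ => ?_
    simp only [map_mul]
    ring
  simp_rw [hexpand, ← Complex.re_sum, mul_sum]
  rw [sum_comm]
  refine congrArg _ (sum_congr rfl fun k _ => ?_)
  rw [sum_comm]

lemma sum_diag_sub_sum_offDiag_le_sum_sum {ι : Type*} [Fintype ι] [DecidableEq ι]
    (T b : ι → ι → ℝ) (hoff : ∀ k l, k ≠ l → -b k l ≤ T k l) :
    ∑ k, T k k - ∑ k, ∑ l, (if k = l then 0 else b k l) ≤ ∑ k, ∑ l, T k l := by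
  have hdiag : ∑ k, T k k = ∑ k, ∑ l, if k = l then T k l else 0 := by
    simp
  rw [hdiag, ← sum_sub_distrib]
  refine sum_le_sum fun k _ => ?_
  rw [← sum_sub_distrib]
  refine sum_le_sum fun l _ => ?_
  split_ifs with hkl
  · simp
  · simpa using hoff k l hkl

lemma sum_sq_norm_sum_mul_ge {ι τ : Type*} [Fintype ι] [DecidableEq ι] [Fintype τ]
    (c : ι → ℂ) (x : ι → τ → ℂ) (N C : ℝ) (hdiag : ∀ k, ∑ t, ‖x k t‖ ^ 2 = N)
    (hoff : ∀ k l, k ≠ l → ‖∑ t, x k t * conj (x l t)‖ ≤ C) :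
    N * ∑ k, ‖c k‖ ^ 2 - C * ∑ k, ∑ l, (if k = l then 0 else ‖c k‖ * ‖c l‖) ≤
      ∑ t, ‖∑ k, c k * x k t‖ ^ 2 := by
  set G : ι → ι → ℂ := fun k l => ∑ t, x k t * conj (x l t)
  have hgram : ∀ k, G k k = N := fun k => by
    simp_rw [G, Complex.mul_conj']
    exact_mod_cast hdiag k
  have hoff' : ∀ k l, k ≠ l → -(C * (‖c k‖ * ‖c l‖)) ≤ (c k * conj (c l) * G k l).re :=
    fun k l hkl => calc
      -(C * (‖c k‖ * ‖c l‖)) ≤ -‖c k * conj (c l) * G k l‖ := by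
        rw [norm_mul, norm_mul, Complex.norm_conj, mul_comm C]
        exact neg_le_neg (mul_le_mul_of_nonneg_left (hoff k l hkl) (by positivity))
      _ ≤ _ := neg_le_of_abs_le (Complex.abs_re_le_norm _)
  rw [sum_sq_norm_sum_mul]
  refine (sum_diag_sub_sum_offDiag_le_sum_sum _ _ hoff').trans_eq' ?_
  simp_rw [hgram, mul_sum, mul_ite, mul_zero, Complex.mul_conj', ← Complex.ofReal_pow,
    ← Complex.ofReal_mul, Complex.ofReal_re, mul_comm N]

lemma norm_zi (a : ZMod 4) : ‖zi a‖ = 1 := by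
  simp [zi]

lemma qcorr_zero {N : ℕ} [NeZero N] (u v : ZMod N → ZMod 4) :
    qcorr u v 0 = ∑ t, zi (u t) * conj (zi (v t)) := by
  simp only [qcorr, add_zero]

lemma sum_sq_norm_zi {N : ℕ} [NeZero N] (u : ZMod N → ZMod 4) : ∑ t, ‖zi (u t)‖ ^ 2 = N := by
  simp [norm_zi]

lemma sq_norm_one_add_I_mul (z : ℂ) : ‖(1 + Complex.I) * z‖ ^ 2 = 2 * ‖z‖ ^ 2 := by
  rw [norm_mul, mul_pow, Complex.sq_norm (1 + _)]
  norm_num [Complex.normSq_apply]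

theorem qam_distance_lower_bound_general (N m : ℕ) [NeZero N]
    (u : Fin m → ZMod N → ZMod 4) (κ κ' : Fin m → ZMod 4)
    (hcorr : ∀ k l : Fin m, k ≠ l →
      ‖ (qcorr (u k) (u l) 0)‖ ≤ 1 + Real.sqrt (N + 1)) :
    ∑ t : ZMod N,
      ‖
        ((1 + Complex.I) * ∑ k : Fin m, (2 : ℂ) ^ (k : ℕ) * zi (u k t) * zi (κ k)
        - (1 + Complex.I) * ∑ k : Fin m, (2 : ℂ) ^ (k : ℕ) * zi (u k t) * zi (κ' k))‖ ^ 2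
    ≥ 2 * N * ∑ k : Fin m, 4 ^ (k : ℕ) * ‖ (zi (κ k) - zi (κ' k))‖ ^ 2
      - 2 * (1 + Real.sqrt (N + 1)) *
          ∑ k : Fin m, ∑ l : Fin m,
            if k = l then 0
            else 2 ^ ((k : ℕ) + (l : ℕ)) * ‖ (zi (κ k) - zi (κ' k))‖ *
              ‖ (zi (κ l) - zi (κ' l))‖ := by
  set c : Fin m → ℂ := fun k => 2 ^ (k : ℕ) * (zi (κ k) - zi (κ' k))
  have hdiff : ∀ t,
      (1 + Complex.I) * ∑ k : Fin m, (2 : ℂ) ^ (k : ℕ) * zi (u k t) * zi (κ k)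
        - (1 + Complex.I) * ∑ k : Fin m, (2 : ℂ) ^ (k : ℕ) * zi (u k t) * zi (κ' k)
      = (1 + Complex.I) * ∑ k, c k * zi (u k t) := fun t => by
    rw [← mul_sub, ← sum_sub_distrib]
    congr 1
    exact sum_congr rfl fun k _ => by ring
  have hnorm : ∀ k, ‖c k‖ = 2 ^ (k : ℕ) * ‖zi (κ k) - zi (κ' k)‖ := fun k => by
    simp [c]
  have hbound := sum_sq_norm_sum_mul_ge c (fun k t => zi (u k t)) N _
    (fun k => sum_sq_norm_zi (u k)) fun k l hkl => (qcorr_zero (u k) (u l)).symm ▸ hcorr k l hkl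
  simp_rw [hnorm] at hbound
  simp_rw [hdiff, sq_norm_one_add_I_mul, ← mul_sum, ge_iff_le]
  refine (mul_le_mul_of_nonneg_left hbound zero_le_two).trans_eq' ?_
  have hsq : ∀ k : ℕ, ∀ a : ℝ, (2 ^ k * a) ^ 2 = 4 ^ k * a ^ 2 := fun k a => by
    rw [mul_pow, ← pow_mul, mul_comm k, pow_mul]
    norm_num
  have hprod : ∀ k l : ℕ, ∀ a b : ℝ, 2 ^ k * a * (2 ^ l * b) = 2 ^ (k + l) * a * b :=
    fun k l a b => by ring
  simp_rw [hsq, hprod]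
  ring

/-- Lower bound on the squared Euclidean distance between two data
modulations of the same `4^m`-QAM spreading sequence, in terms of `Δ_k = i^{κ_k} - i^{κ'_k}`,
assuming the distinct-index component correlations at shift `0` are bounded by `1 + √(N+1)`. -/
theorem qam_distance_lower_bound (N m : ℕ) [NeZero N] (hm : 1 ≤ m)
    (u : Fin m → ZMod N → ZMod 4) (κ κ' : Fin m → ZMod 4)
    (hcorr : ∀ k l : Fin m, k ≠ l →
      ‖ (qcorr (u k) (u l) 0)‖ ≤ 1 + Real.sqrt (N + 1)) :
    ∑ t : ZMod N,
      ‖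
        ((1 + Complex.I) * ∑ k : Fin m, (2 : ℂ) ^ (k : ℕ) * zi (u k t) * zi (κ k)
        - (1 + Complex.I) * ∑ k : Fin m, (2 : ℂ) ^ (k : ℕ) * zi (u k t) * zi (κ' k))‖ ^ 2
    ≥ 2 * N * ∑ k : Fin m, 4 ^ (k : ℕ) * ‖ (zi (κ k) - zi (κ' k))‖ ^ 2
      - 2 * (1 + Real.sqrt (N + 1)) *
          ∑ k : Fin m, ∑ l : Fin m,
            if k = l then 0
            else 2 ^ ((k : ℕ) + (l : ℕ)) * ‖ (zi (κ k) - zi (κ' k))‖ *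
              ‖ (zi (κ l) - zi (κ' l))‖ :=
  qam_distance_lower_bound_general N m u κ κ' hcorr
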